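/- Let K ≥ 1 and let g_1, …, g_K be independent random variables each following the standard Gumbel distribution, i.e. the distribution on ℝ with density f(t) = exp(−(t + exp(−t))) with respect to Lebesgue measure. Then for any μ ∈ ℝ^K and every k ∈ {1, …, K}, P[argmax(g + μ) = k] = softmax_k(μ) = exp(μ_k) / ∑_{l=1}^K exp(μ_l). In particular, for a categorical distribution (p_1, …, p_K) with all p_k > 0, choosing μ_k = log p_k gives P[argmax(g + μ) = k] = p_k. -/

import Mathlib

/-!
Conditionally on `g_k = x`, the event `argmax (g + μ) = k` has probability
`∏_{j ≠ k} F (x + μ_k - μ_j)`, where `F x = exp (-e^{-x})` is the Gumbel distribution function.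
Since `F (x + a) = exp (-e^{-a} e^{-x})`, this product is `exp (-s e^{-x})` with
`s = ∑_{j ≠ k} e^{μ_j - μ_k}`. Integrating it against the Gumbel density `e^{-x} F x` gives
`1 / (1 + s) = softmax_k μ`, because `(1 + s) e^{-x} exp (-(1 + s) e^{-x})` is the derivative of the
distribution function `exp (-(1 + s) e^{-x})`.
-/

open MeasureTheory ProbabilityTheory

/-- The standard Gumbel distribution: the measure on `ℝ` with density
`t ↦ exp(−(t + exp(−t)))` with respect to Lebesgue measure. -/
noncomputable def stdGumbel : Measure ℝ :=
  volume.withDensity fun t => ENNReal.ofReal (Real.exp (-(t + Real.exp (-t))))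

/-- The law of `K` independent standard Gumbel random variables. -/
noncomputable def stdGumbelPi (K : ℕ) : Measure (Fin K → ℝ) :=
  Measure.pi fun _ => stdGumbel

/-- The event `{g : argmax(g + μ) = k}`. -/
def argmaxEvent {K : ℕ} (μ : Fin K → ℝ) (k : Fin K) : Set (Fin K → ℝ) :=
  {g | ∀ j, j ≠ k → g j + μ j < g k + μ k}

open Real Set Filter Topology

theorem integrable_deriv_of_nonneg_of_abs_le {F F' : ℝ → ℝ} {C : ℝ}
    (hderiv : ∀ x, HasDerivAt F (F' x) x) (hnonneg : ∀ x, 0 ≤ F' x) (hbound : ∀ x, |F x| ≤ C) :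
    Integrable F' := by
  have hcont : Continuous F := continuous_iff_continuousAt.2 fun x => (hderiv x).continuousAt
  refine integrable_of_intervalIntegral_norm_bounded (2 * C) (l := atTop) (a := Neg.neg) (b := id)
    (fun i => intervalIntegral.integrableOn_deriv_of_nonneg hcont.continuousOn
      (fun x _ => hderiv x) fun x _ => hnonneg x) tendsto_neg_atTop_atBot tendsto_id
    (Eventually.of_forall fun i => ?_)
  have hint : IntervalIntegrable F' volume (-i) i :=
    intervalIntegral.intervalIntegrable_deriv_of_nonneg hcont.continuousOn
      (fun x _ => hderiv x) fun x _ => hnonneg x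
  calc ∫ x in -i..id i, ‖F' x‖ = F i - F (-i) := by
        simp_rw [Real.norm_of_nonneg (hnonneg _)]
        exact intervalIntegral.integral_eq_sub_of_hasDerivAt (fun x _ => hderiv x) hint
    _ ≤ 2 * C := by linarith [abs_le.1 (hbound i), abs_le.1 (hbound (-i))]

/-- `gumbelCDF c` is the distribution function of the Gumbel law with location `log c`. -/
noncomputable def gumbelCDF (c x : ℝ) : ℝ := exp (-(c * exp (-x)))

noncomputable def gumbelPDF (c x : ℝ) : ℝ := c * exp (-x) * gumbelCDF c x

@[fun_prop]
theorem continuous_gumbelCDF (c : ℝ) : Continuous (gumbelCDF c) := by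
  unfold gumbelCDF
  fun_prop

@[fun_prop]
theorem continuous_gumbelPDF (c : ℝ) : Continuous (gumbelPDF c) := by
  unfold gumbelPDF
  fun_prop

theorem gumbelCDF_pos (c x : ℝ) : 0 < gumbelCDF c x := exp_pos _

theorem gumbelCDF_le_one {c : ℝ} (hc : 0 ≤ c) (x : ℝ) : gumbelCDF c x ≤ 1 :=
  exp_le_one_iff.2 (neg_nonpos.2 (mul_nonneg hc (exp_pos _).le))

theorem gumbelPDF_nonneg {c : ℝ} (hc : 0 ≤ c) (x : ℝ) : 0 ≤ gumbelPDF c x :=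
  mul_nonneg (mul_nonneg hc (exp_pos _).le) (gumbelCDF_pos c x).le

theorem gumbelCDF_mul_gumbelCDF (a b x : ℝ) :
    gumbelCDF a x * gumbelCDF b x = gumbelCDF (a + b) x := by
  simp only [gumbelCDF, ← exp_add]
  ring_nf

theorem prod_gumbelCDF {ι : Type*} (s : Finset ι) (c : ι → ℝ) (x : ℝ) :
    ∏ i ∈ s, gumbelCDF (c i) x = gumbelCDF (∑ i ∈ s, c i) x := by
  simp only [gumbelCDF, ← exp_sum, Finset.sum_mul, Finset.sum_neg_distrib]

theorem gumbelCDF_add (c x a : ℝ) : gumbelCDF c (x + a) = gumbelCDF (c * exp (-a)) x := by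
  simp only [gumbelCDF, neg_add, exp_add]
  ring_nf

theorem hasDerivAt_gumbelCDF (c x : ℝ) : HasDerivAt (gumbelCDF c) (gumbelPDF c x) x := by
  have hinner : HasDerivAt (fun x => -(c * exp (-x))) (c * exp (-x)) x := by
    simpa using ((hasDerivAt_neg x).exp.const_mul c).fun_neg
  rw [gumbelPDF, mul_comm]
  exact hinner.exp

theorem tendsto_gumbelCDF_atBot {c : ℝ} (hc : 0 < c) : Tendsto (gumbelCDF c) atBot (𝓝 0) :=
  tendsto_exp_atBot.comp <| tendsto_neg_atTop_atBot.comp <|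
    (tendsto_exp_atTop.comp tendsto_neg_atBot_atTop).const_mul_atTop hc

theorem tendsto_gumbelCDF_atTop (c : ℝ) : Tendsto (gumbelCDF c) atTop (𝓝 1) := by
  have := ((tendsto_exp_atBot.comp tendsto_neg_atTop_atBot).const_mul c).neg
  unfold gumbelCDF
  simpa [Function.comp_def] using (continuous_exp.tendsto _).comp this

theorem integrable_gumbelPDF {c : ℝ} (hc : 0 ≤ c) : Integrable (gumbelPDF c) :=
  integrable_deriv_of_nonneg_of_abs_le (hasDerivAt_gumbelCDF c) (gumbelPDF_nonneg hc)
    fun x => abs_le.2 ⟨by linarith [gumbelCDF_pos c x], gumbelCDF_le_one hc x⟩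

theorem integral_gumbelPDF {c : ℝ} (hc : 0 < c) : ∫ x, gumbelPDF c x = 1 := by
  simpa using integral_of_hasDerivAt_of_tendsto (hasDerivAt_gumbelCDF c)
    (integrable_gumbelPDF hc.le) (tendsto_gumbelCDF_atBot hc) (tendsto_gumbelCDF_atTop c)

theorem integral_Iic_gumbelPDF {c : ℝ} (hc : 0 < c) (a : ℝ) :
    ∫ x in Iic a, gumbelPDF c x = gumbelCDF c a := by
  simpa using integral_Iic_of_hasDerivAt_of_tendsto' (fun x _ => hasDerivAt_gumbelCDF c x)
    (integrable_gumbelPDF hc.le).integrableOn (tendsto_gumbelCDF_atBot hc)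

theorem stdGumbel_eq_withDensity_gumbelPDF :
    stdGumbel = volume.withDensity fun t => ENNReal.ofReal (gumbelPDF 1 t) := by
  rw [stdGumbel]
  congr 1 with t
  simp only [gumbelPDF, gumbelCDF, one_mul, ← exp_add]
  ring_nf

instance : IsProbabilityMeasure stdGumbel where
  measure_univ := by
    rw [stdGumbel_eq_withDensity_gumbelPDF, withDensity_apply _ MeasurableSet.univ,
      Measure.restrict_univ, ← ofReal_integral_eq_lintegral_ofReal
        (integrable_gumbelPDF zero_le_one) (Eventually.of_forall (gumbelPDF_nonneg zero_le_one)),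
      integral_gumbelPDF one_pos, ENNReal.ofReal_one]

theorem stdGumbel_Iio (a : ℝ) : stdGumbel (Iio a) = ENNReal.ofReal (gumbelCDF 1 a) := by
  rw [stdGumbel_eq_withDensity_gumbelPDF, withDensity_apply _ measurableSet_Iio,
    Measure.restrict_congr_set Iio_ae_eq_Iic, ← integral_Iic_gumbelPDF one_pos,
    ofReal_integral_eq_lintegral_ofReal (integrable_gumbelPDF zero_le_one).integrableOn
      (Eventually.of_forall (gumbelPDF_nonneg zero_le_one))]

theorem lintegral_gumbelCDF_stdGumbel {s : ℝ} (hs : 0 < 1 + s) :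
    ∫⁻ x, ENNReal.ofReal (gumbelCDF s x) ∂stdGumbel = ENNReal.ofReal (1 + s)⁻¹ := by
  have hdensity (x : ℝ) : gumbelPDF 1 x * gumbelCDF s x = (1 + s)⁻¹ * gumbelPDF (1 + s) x := by
    simp only [gumbelPDF, ← gumbelCDF_mul_gumbelCDF]
    field_simp
  rw [stdGumbel_eq_withDensity_gumbelPDF, lintegral_withDensity_eq_lintegral_mul _
    (by fun_prop) (by fun_prop)]
  simp_rw [Pi.mul_apply, ← ENNReal.ofReal_mul (gumbelPDF_nonneg zero_le_one _), hdensity]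
  rw [← ofReal_integral_eq_lintegral_ofReal ((integrable_gumbelPDF hs.le).const_mul _)
    (Eventually.of_forall fun x => mul_nonneg (inv_nonneg.2 hs.le) (gumbelPDF_nonneg hs.le x)),
    integral_const_mul, integral_gumbelPDF hs, mul_one]

theorem prod_stdGumbel_Iio_add {ι : Type*} (s : Finset ι) (a : ι → ℝ) (x : ℝ) :
    ∏ i ∈ s, stdGumbel (Iio (x + a i)) = ENNReal.ofReal (gumbelCDF (∑ i ∈ s, exp (-a i)) x) := by
  simp_rw [stdGumbel_Iio, gumbelCDF_add, one_mul]
  rw [← ENNReal.ofReal_prod_of_nonneg fun i _ => (gumbelCDF_pos _ _).le, prod_gumbelCDF]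

theorem pi_argmaxEvent_eq_lintegral {n : ℕ} (ν : Fin (n + 1) → Measure ℝ)
    [∀ i, SigmaFinite (ν i)] (μ : Fin (n + 1) → ℝ) (k : Fin (n + 1)) :
    Measure.pi ν (argmaxEvent μ k) =
      ∫⁻ x, ∏ j, ν (k.succAbove j) (Iio (x + μ k - μ (k.succAbove j))) ∂ν k := by
  set T : Set (ℝ × (Fin n → ℝ)) := {q | ∀ j, q.2 j < q.1 + μ k - μ (k.succAbove j)}
  have hT : MeasurableSet T := by
    simp only [T, ofPred_forall]
    exact MeasurableSet.iInter fun j => measurableSet_lt (by fun_prop) (by fun_prop)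
  have hpre : MeasurableEquiv.piFinSuccAbove (fun _ => ℝ) k ⁻¹' T = argmaxEvent μ k := by
    ext g
    change (∀ j, g (k.succAbove j) < g k + μ k - μ (k.succAbove j)) ↔ _
    simp only [argmaxEvent, mem_ofPred_eq, Fin.forall_iff_succAbove k, ne_eq, not_true_eq_false,
      IsEmpty.forall_iff, true_and, Fin.succAbove_ne, not_false_eq_true, forall_const]
    exact forall_congr' fun j => by constructor <;> intro h <;> linarith
  rw [← hpre, (measurePreserving_piFinSuccAbove ν k).measure_preimage_equiv,
    Measure.prod_apply hT]
  congr with x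
  rw [← Measure.pi_pi]
  congr with y
  simp [T]

theorem inv_one_add_sum_exp_sub {n : ℕ} (μ : Fin (n + 1) → ℝ) (k : Fin (n + 1)) :
    (1 + ∑ j, exp (μ (k.succAbove j) - μ k))⁻¹ = exp (μ k) / ∑ l, exp (μ l) := by
  rw [Fin.sum_univ_succAbove _ k]
  simp only [exp_sub, ← Finset.sum_div]
  field_simp

theorem gumbelMax_prob_eq_softmax_general (K : ℕ) (k : Fin K) :
    (∀ μ : Fin K → ℝ,
      stdGumbelPi K (argmaxEvent μ k) =
        ENNReal.ofReal (Real.exp (μ k) / ∑ l, Real.exp (μ l))) ∧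
    (∀ p : Fin K → ℝ, (∀ l, 0 < p l) → ∑ l, p l = 1 →
      stdGumbelPi K (argmaxEvent (fun l => Real.log (p l)) k) =
        ENNReal.ofReal (p k)) := by
  obtain ⟨n, rfl⟩ := Nat.exists_eq_add_one_of_ne_zero k.pos.ne'
  have softmax (μ : Fin (n + 1) → ℝ) :
      stdGumbelPi (n + 1) (argmaxEvent μ k) =
        ENNReal.ofReal (exp (μ k) / ∑ l, exp (μ l)) := by
    rw [stdGumbelPi, pi_argmaxEvent_eq_lintegral]
    simp_rw [add_sub_assoc, prod_stdGumbel_Iio_add, neg_sub]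
    rw [lintegral_gumbelCDF_stdGumbel (by positivity), inv_one_add_sum_exp_sub]
  refine ⟨softmax, fun p hp hsum => ?_⟩
  simp_rw [softmax, exp_log (hp _), hsum, div_one]

/-- **Gumbel-max trick**: for independent standard Gumbel variables `g_1, …, g_K`
and any `μ ∈ ℝ^K`, `P[argmax(g + μ) = k] = softmax_k(μ) = exp(μ_k) / ∑_l exp(μ_l)`.
In particular, for a categorical distribution `(p_1, …, p_K)` with all `p_k > 0`,
choosing `μ_k = log p_k` gives `P[argmax(g + μ) = k] = p_k`. -/
theorem gumbelMax_prob_eq_softmax (K : ℕ) (hK : 1 ≤ K) (k : Fin K) :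
    (∀ μ : Fin K → ℝ,
      stdGumbelPi K (argmaxEvent μ k) =
        ENNReal.ofReal (Real.exp (μ k) / ∑ l, Real.exp (μ l))) ∧
    (∀ p : Fin K → ℝ, (∀ l, 0 < p l) → ∑ l, p l = 1 →
      stdGumbelPi K (argmaxEvent (fun l => Real.log (p l)) k) =
        ENNReal.ofReal (p k)) :=
  gumbelMax_prob_eq_softmax_general K k
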